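/- Modal restriction: if V is a value of L□pol typed as Γ ⦙ Θ ⊢ V : A ; Δ where the type A has modal polarity □, then V is already typable as Γ_□ ⦙ Θ ⊢ V : A ; ⋄, i.e. using only the modal-polarity part Γ_□ of Γ, the modal context Θ, and the empty classical context. -/

import Mathlib

namespace LBox

/-- Polarities: `+`, `-`, `□`. -/
inductive Pol | pos | neg | box
deriving DecidableEq, Repr

/-- The binary operation `⊙` on polarities. -/
def Pol.odot : Pol → Pol → Pol
  | .box, .box => .box
  | _, _ => .pos

/-- Types of L□pol. -/
inductive Ty
  | one                  -- 𝟙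
  | tensor (A B : Ty)    -- A ⊗ B
  | oplus  (A B : Ty)    -- A ⊕ B
  | boxT   (A : Ty)      -- □A
  | negT   (A : Ty)      -- ¬A
  | withT  (A B : Ty)    -- A & B
  | par    (A B : Ty)    -- A ⅋ B
deriving DecidableEq, Repr

/-- The polarity `ϖ(A)` of a type. -/
def pol : Ty → Pol
  | .one => .box
  | .tensor A B => (pol A).odot (pol B)
  | .oplus A B => (pol A).odot (pol B)
  | .boxT _ => .box
  | .negT _ => .neg
  | .withT _ _ => .neg
  | .par _ _ => .neg

mutual
/-- Values of L□pol. -/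
inductive Val
  | var (x : String)
  | pair (V W : Val)                                   -- (V, W)
  | box (V : Val)                                      -- □V
  | unit                                               -- ()
  | inl (V : Val) | inr (V : Val)                      -- ι₁ V, ι₂ V
  | muNeg (x : String) (ε : Pol) (c : Cmd)             -- μ[xᵉ].c
  | record (α : String) (ε₁ : Pol) (c₁ : Cmd)
           (β : String) (ε₂ : Pol) (c₂ : Cmd)          -- μ⟨α.c₁ ‖ β.c₂⟩
  | muPair (α : String) (ε₁ : Pol)
           (β : String) (ε₂ : Pol) (c : Cmd)           -- μ(α,β).c
  | muN (α : String) (c : Cmd)                         -- μα⁻.c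

/-- Co-values of L□pol. -/
inductive CoVal
  | covar (α : String)
  | proj1 (S : CoVal) | proj2 (S : CoVal)              -- π₁ S, π₂ S
  | muBox (x : String) (ε : Pol) (c : Cmd)             -- μ̃□xᵉ.c
  | negV (V : Val)                                     -- [V]
  | pair (S S' : CoVal)                                -- (S, S')
  | muUnit (c : Cmd)                                   -- μ̃().c
  | muVar (x : String) (ε : Pol) (c : Cmd)             -- μ̃x^⊞.c
  | muPair (x : String) (ε₁ : Pol)
           (y : String) (ε₂ : Pol) (c : Cmd)           -- μ̃(x,y).c
  | muSum (x : String) (ε₁ : Pol) (c₁ : Cmd)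
          (y : String) (ε₂ : Pol) (c₂ : Cmd)           -- μ̃[x.c₁ | y.c₂]

/-- Expressions of L□pol. -/
inductive Expr
  | val (V : Val)
  | mu (α : String) (ε : Pol) (c : Cmd)                -- μα^⊞.c

/-- Environments of L□pol. -/
inductive Env
  | coval (S : CoVal)
  | muTilde (x : String) (c : Cmd)                     -- μ̃x⁻.c

/-- Commands ⟨t ‖ e⟩ᵉ of L□pol. -/
inductive Cmd
  | mk (ε : Pol) (t : Expr) (e : Env)
end

/-- Simultaneous substitutions: values for variables, co-values for covariables. -/
structure Subst where
  v : String → Option Val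
  s : String → Option CoVal

mutual
def subV (σ : Subst) : Val → Val
  | .var x => (σ.v x).getD (.var x)
  | .pair V W => .pair (subV σ V) (subV σ W)
  | .box V => .box (subV σ V)
  | .unit => .unit
  | .inl V => .inl (subV σ V)
  | .inr V => .inr (subV σ V)
  | .muNeg x ε c => .muNeg x ε (subC σ c)
  | .record α ε₁ c₁ β ε₂ c₂ => .record α ε₁ (subC σ c₁) β ε₂ (subC σ c₂)
  | .muPair α ε₁ β ε₂ c => .muPair α ε₁ β ε₂ (subC σ c)
  | .muN α c => .muN α (subC σ c)

def subS (σ : Subst) : CoVal → CoVal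
  | .covar α => (σ.s α).getD (.covar α)
  | .proj1 S => .proj1 (subS σ S)
  | .proj2 S => .proj2 (subS σ S)
  | .muBox x ε c => .muBox x ε (subC σ c)
  | .negV V => .negV (subV σ V)
  | .pair S S' => .pair (subS σ S) (subS σ S')
  | .muUnit c => .muUnit (subC σ c)
  | .muVar x ε c => .muVar x ε (subC σ c)
  | .muPair x ε₁ y ε₂ c => .muPair x ε₁ y ε₂ (subC σ c)
  | .muSum x ε₁ c₁ y ε₂ c₂ => .muSum x ε₁ (subC σ c₁) y ε₂ (subC σ c₂)

def subE (σ : Subst) : Env → Env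
  | .coval S => .coval (subS σ S)
  | .muTilde x c => .muTilde x (subC σ c)

def subT (σ : Subst) : Expr → Expr
  | .val V => .val (subV σ V)
  | .mu α ε c => .mu α ε (subC σ c)

def subC (σ : Subst) : Cmd → Cmd
  | .mk ε t e => .mk ε (subT σ t) (subE σ e)
end

/-- Substitution of a single value for a variable. -/
def substV1 (c : Cmd) (x : String) (V : Val) : Cmd :=
  subC ⟨fun y => if y = x then some V else none, fun _ => none⟩ c

/-- Substitution of a single co-value for a covariable. -/
def substS1 (c : Cmd) (α : String) (S : CoVal) : Cmd :=
  subC ⟨fun _ => none, fun β => if β = α then some S else none⟩ c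

/-- Simultaneous substitution of two values. -/
def substV2 (c : Cmd) (x : String) (V : Val) (y : String) (W : Val) : Cmd :=
  subC ⟨fun z => if z = x then some V else if z = y then some W else none,
        fun _ => none⟩ c

/-- Simultaneous substitution of two co-values. -/
def substS2 (c : Cmd) (α : String) (S : CoVal) (β : String) (S' : CoVal) : Cmd :=
  subC ⟨fun _ => none,
        fun γ => if γ = α then some S else if γ = β then some S' else none⟩ c

/-- Mixed substitution of a value and a co-value. -/
def substVS (c : Cmd) (x : String) (V : Val) (β : String) (S : CoVal) : Cmd :=
  subC ⟨fun z => if z = x then some V else none,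
        fun γ => if γ = β then some S else none⟩ c

/-- The toplevel operational semantics `▷` of L□pol (Figure 1). -/
inductive Step : Cmd → Cmd → Prop
  | mu (ε : Pol) (α : String) (c : Cmd) (S : CoVal) :
      Step (.mk ε (.mu α ε c) (.coval S)) (substS1 c α S)
  | muN (α : String) (c : Cmd) (S : CoVal) :
      Step (.mk .neg (.val (.muN α c)) (.coval S)) (substS1 c α S)
  | muTildeVar (ε : Pol) (V : Val) (x : String) (c : Cmd) :
      Step (.mk ε (.val V) (.coval (.muVar x ε c))) (substV1 c x V)
  | muTilde (V : Val) (x : String) (c : Cmd) :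
      Step (.mk .neg (.val V) (.muTilde x c)) (substV1 c x V)
  | unit (c : Cmd) :
      Step (.mk .box (.val .unit) (.coval (.muUnit c))) c
  | pair (ε : Pol) (V W : Val) (x : String) (ε₁ : Pol) (y : String) (ε₂ : Pol) (c : Cmd) :
      Step (.mk ε (.val (.pair V W)) (.coval (.muPair x ε₁ y ε₂ c)))
           (substV2 c x V y W)
  | inl (ε : Pol) (V : Val) (x₁ : String) (ε₁ : Pol) (c₁ : Cmd)
        (x₂ : String) (ε₂ : Pol) (c₂ : Cmd) :
      Step (.mk ε (.val (.inl V)) (.coval (.muSum x₁ ε₁ c₁ x₂ ε₂ c₂)))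
           (substV1 c₁ x₁ V)
  | inr (ε : Pol) (V : Val) (x₁ : String) (ε₁ : Pol) (c₁ : Cmd)
        (x₂ : String) (ε₂ : Pol) (c₂ : Cmd) :
      Step (.mk ε (.val (.inr V)) (.coval (.muSum x₁ ε₁ c₁ x₂ ε₂ c₂)))
           (substV1 c₂ x₂ V)
  | box (V : Val) (x : String) (ε : Pol) (c : Cmd) :
      Step (.mk .box (.val (.box V)) (.coval (.muBox x ε c))) (substV1 c x V)
  | neg (x : String) (ε : Pol) (c : Cmd) (V : Val) :
      Step (.mk .neg (.val (.muNeg x ε c)) (.coval (.negV V))) (substV1 c x V)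
  | copair (α : String) (ε₁ : Pol) (β : String) (ε₂ : Pol) (c : Cmd) (S S' : CoVal) :
      Step (.mk .neg (.val (.muPair α ε₁ β ε₂ c)) (.coval (.pair S S')))
           (substS2 c α S β S')
  | proj1 (α₁ : String) (ε₁ : Pol) (c₁ : Cmd) (α₂ : String) (ε₂ : Pol) (c₂ : Cmd) (S : CoVal) :
      Step (.mk .neg (.val (.record α₁ ε₁ c₁ α₂ ε₂ c₂)) (.coval (.proj1 S)))
           (substS1 c₁ α₁ S)
  | proj2 (α₁ : String) (ε₁ : Pol) (c₁ : Cmd) (α₂ : String) (ε₂ : Pol) (c₂ : Cmd) (S : CoVal) :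
      Step (.mk .neg (.val (.record α₁ ε₁ c₁ α₂ ε₂ c₂)) (.coval (.proj2 S)))
           (substS1 c₂ α₂ S)

end LBox
namespace LBox

/-- Typing contexts: lists of (co)variable/type pairs. -/
abbrev Ctx := List (String × Ty)

/-- `Γ_□`: the restriction of a context to modal-polarity types. -/
def modalCtx (Γ : Ctx) : Ctx := Γ.filter (fun p => pol p.2 = .box)

/-- `Γ` is fully modal. -/
def IsModalCtx (Γ : Ctx) : Prop := ∀ p ∈ Γ, pol p.2 = Pol.box

/-- Renamings θ ∈ 𝔑(Γ ⦙ Θ ⊢ Δ ⇒ Γ' ⦙ Θ' ⊢ Δ'). -/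
def Ren (θ : String → String) (Γ Θ Δ Γ' Θ' Δ' : Ctx) : Prop :=
  (∀ x A, (x, A) ∈ Γ → (θ x, A) ∈ Γ') ∧
  (∀ x A, (x, A) ∈ Θ → (θ x, A) ∈ Θ') ∧
  (∀ α A, (α, A) ∈ Δ → (θ α, A) ∈ Δ')

/-- Applying a renaming (as a substitution by (co)variables). -/
def renSubst (θ : String → String) : Subst :=
  ⟨fun x => some (.var (θ x)), fun α => some (.covar (θ α))⟩

mutual
/-- `Γ ⦙ Θ ⊢ V : A ; Δ`. -/
inductive TyVal : Ctx → Ctx → Val → Ty → Ctx → Prop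
  | ax (x : String) (A : Ty) : TyVal [(x, A)] [] (.var x) A []
  | boxAx (x : String) (A : Ty) : TyVal [] [(x, A)] (.var x) A []
  | unit : TyVal [] [] .unit .one []
  | pair {Γ Θ Δ Γ' Θ' Δ' V W A B} :
      TyVal Γ Θ V A Δ → TyVal Γ' Θ' W B Δ' →
      TyVal (Γ ++ Γ') (Θ ++ Θ') (.pair V W) (.tensor A B) (Δ ++ Δ')
  | inl {Γ Θ Δ V A B} : TyVal Γ Θ V A Δ → TyVal Γ Θ (.inl V) (.oplus A B) Δ
  | inr {Γ Θ Δ V A B} : TyVal Γ Θ V B Δ → TyVal Γ Θ (.inr V) (.oplus A B) Δ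
  | muN {Γ Θ Δ α c A} : pol A = .neg → TyCmd Γ Θ c ((α, A) :: Δ) →
      TyVal Γ Θ (.muN α c) A Δ
  | negI {Γ Θ Δ x c A} : TyCmd ((x, A) :: Γ) Θ c Δ →
      TyVal Γ Θ (.muNeg x (pol A) c) (.negT A) Δ
  | parI {Γ Θ Δ α β c A B} :
      TyCmd Γ Θ c ((α, A) :: (β, B) :: Δ) →
      TyVal Γ Θ (.muPair α (pol A) β (pol B) c) (.par A B) Δ
  | withI {Γ Θ Δ α₁ c₁ α₂ c₂ A B} :
      TyCmd Γ Θ c₁ ((α₁, A) :: Δ) → TyCmd Γ Θ c₂ ((α₂, B) :: Δ) →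
      TyVal Γ Θ (.record α₁ (pol A) c₁ α₂ (pol B) c₂) (.withT A B) Δ
  | boxI {Γ Θ V A} : IsModalCtx Γ → TyVal Γ Θ V A [] →
      TyVal Γ Θ (.box V) (.boxT A) []
  | ren {Γ Θ Δ Γ' Θ' Δ' V A} (θ : String → String) :
      TyVal Γ Θ V A Δ → Ren θ Γ Θ Δ Γ' Θ' Δ' →
      TyVal Γ' Θ' (subV (renSubst θ) V) A Δ'

/-- `Γ ⦙ Θ ; S : A ⊢ Δ`. -/
inductive TyCoVal : Ctx → Ctx → CoVal → Ty → Ctx → Prop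
  | ax (α : String) (A : Ty) : TyCoVal [] [] (.covar α) A [(α, A)]
  | muVar {Γ Θ Δ x c A} : pol A ≠ .neg → TyCmd ((x, A) :: Γ) Θ c Δ →
      TyCoVal Γ Θ (.muVar x (pol A) c) A Δ
  | unitE {Γ Θ Δ c} : TyCmd Γ Θ c Δ → TyCoVal Γ Θ (.muUnit c) .one Δ
  | tensorE {Γ Θ Δ x y c A B} :
      TyCmd ((x, A) :: (y, B) :: Γ) Θ c Δ →
      TyCoVal Γ Θ (.muPair x (pol A) y (pol B) c) (.tensor A B) Δ
  | oplusE {Γ Θ Δ x₁ c₁ x₂ c₂ A B} :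
      TyCmd ((x₁, A) :: Γ) Θ c₁ Δ → TyCmd ((x₂, B) :: Γ) Θ c₂ Δ →
      TyCoVal Γ Θ (.muSum x₁ (pol A) c₁ x₂ (pol B) c₂) (.oplus A B) Δ
  | negE {Γ Θ Δ V A} : TyVal Γ Θ V A Δ → TyCoVal Γ Θ (.negV V) (.negT A) Δ
  | parE {Γ Θ Δ Γ' Θ' Δ' S S' A B} :
      TyCoVal Γ Θ S A Δ → TyCoVal Γ' Θ' S' B Δ' →
      TyCoVal (Γ ++ Γ') (Θ ++ Θ') (.pair S S') (.par A B) (Δ ++ Δ')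
  | proj1 {Γ Θ Δ S A B} : TyCoVal Γ Θ S A Δ →
      TyCoVal Γ Θ (.proj1 S) (.withT A B) Δ
  | proj2 {Γ Θ Δ S A B} : TyCoVal Γ Θ S B Δ →
      TyCoVal Γ Θ (.proj2 S) (.withT A B) Δ
  | boxE {Γ Θ Δ x c A} : TyCmd Γ ((x, A) :: Θ) c Δ →
      TyCoVal Γ Θ (.muBox x (pol A) c) (.boxT A) Δ
  | ren {Γ Θ Δ Γ' Θ' Δ' S A} (θ : String → String) :
      TyCoVal Γ Θ S A Δ → Ren θ Γ Θ Δ Γ' Θ' Δ' →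
      TyCoVal Γ' Θ' (subS (renSubst θ) S) A Δ'

/-- `Γ ⦙ Θ ⊢ t : A ∣ Δ`. -/
inductive TyExpr : Ctx → Ctx → Expr → Ty → Ctx → Prop
  | ofVal {Γ Θ Δ V A} : pol A ≠ .neg → TyVal Γ Θ V A Δ →
      TyExpr Γ Θ (.val V) A Δ
  | mu {Γ Θ Δ α c A} : pol A ≠ .neg → TyCmd Γ Θ c ((α, A) :: Δ) →
      TyExpr Γ Θ (.mu α (pol A) c) A Δ
  | ren {Γ Θ Δ Γ' Θ' Δ' t A} (θ : String → String) :
      TyExpr Γ Θ t A Δ → Ren θ Γ Θ Δ Γ' Θ' Δ' →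
      TyExpr Γ' Θ' (subT (renSubst θ) t) A Δ'

/-- `Γ ⦙ Θ ∣ e : A ⊢ Δ`. -/
inductive TyEnv : Ctx → Ctx → Env → Ty → Ctx → Prop
  | ofCoVal {Γ Θ Δ S A} : pol A = .neg → TyCoVal Γ Θ S A Δ →
      TyEnv Γ Θ (.coval S) A Δ
  | muTilde {Γ Θ Δ x c A} : pol A = .neg → TyCmd ((x, A) :: Γ) Θ c Δ →
      TyEnv Γ Θ (.muTilde x c) A Δ
  | ren {Γ Θ Δ Γ' Θ' Δ' e A} (θ : String → String) :
      TyEnv Γ Θ e A Δ → Ren θ Γ Θ Δ Γ' Θ' Δ' →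
      TyEnv Γ' Θ' (subE (renSubst θ) e) A Δ'

/-- `c : (Γ ⦙ Θ ⊢ Δ)`. -/
inductive TyCmd : Ctx → Ctx → Cmd → Ctx → Prop
  | cutPos {Γ Θ Δ Γ' Θ' Δ' t S A} : pol A ≠ .neg →
      TyExpr Γ Θ t A Δ → TyCoVal Γ' Θ' S A Δ' →
      TyCmd (Γ ++ Γ') (Θ ++ Θ') (.mk (pol A) t (.coval S)) (Δ ++ Δ')
  | cutNeg {Γ Θ Δ Γ' Θ' Δ' V e A} : pol A = .neg →
      TyVal Γ Θ V A Δ → TyEnv Γ' Θ' e A Δ' →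
      TyCmd (Γ ++ Γ') (Θ ++ Θ') (.mk .neg (.val V) e) (Δ ++ Δ')
  | ren {Γ Θ Δ Γ' Θ' Δ' c} (θ : String → String) :
      TyCmd Γ Θ c Δ → Ren θ Γ Θ Δ Γ' Θ' Δ' →
      TyCmd Γ' Θ' (subC (renSubst θ) c) Δ'
end

end LBox
namespace LBox

theorem Pol.odot_eq_box {ε ε' : Pol} (h : ε.odot ε' = .box) : ε = .box ∧ ε' = .box := by
  cases ε <;> cases ε' <;> simp_all [Pol.odot]

theorem mem_modalCtx {p : String × Ty} {Γ : Ctx} : p ∈ modalCtx Γ ↔ p ∈ Γ ∧ pol p.2 = .box := by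
  simp [modalCtx]

theorem modalCtx_append (Γ Γ' : Ctx) : modalCtx (Γ ++ Γ') = modalCtx Γ ++ modalCtx Γ' :=
  List.filter_append _ _

theorem modalCtx_eq_self {Γ : Ctx} (h : IsModalCtx Γ) : modalCtx Γ = Γ :=
  List.filter_eq_self.mpr fun p hp => by simp [h p hp]

theorem Ren.modalCtx {θ : String → String} {Γ Θ Δ Γ' Θ' Δ' : Ctx} (h : Ren θ Γ Θ Δ Γ' Θ' Δ') :
    Ren θ (modalCtx Γ) Θ [] (modalCtx Γ') Θ' [] := by
  refine ⟨fun x A hx => ?_, h.2.1, by simp⟩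
  obtain ⟨hx, hA⟩ := mem_modalCtx.mp hx
  exact mem_modalCtx.mpr ⟨h.1 x A hx, hA⟩

/- Rules concluding a negative type are ruled out by `pol A = .box` (implicitly by the match, except
for `muN`); the remaining rules never bind covariables, and `□`-introduction already has a modal
context. -/
theorem TyVal.restrict_modalCtx : ∀ {Γ Θ Δ : Ctx} {V : Val} {A : Ty},
    TyVal Γ Θ V A Δ → pol A = .box → TyVal (modalCtx Γ) Θ V A []
  | _, _, _, _, _, .ax x A, hA => by
    simpa [modalCtx, hA] using TyVal.ax x A
  | _, _, _, _, _, .boxAx x A, _ => .boxAx x A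
  | _, _, _, _, _, .unit, _ => .unit
  | _, _, _, _, _, .pair hV hW, hA => by
    obtain ⟨hA₁, hA₂⟩ := Pol.odot_eq_box hA
    rw [modalCtx_append]
    exact .pair (hV.restrict_modalCtx hA₁) (hW.restrict_modalCtx hA₂)
  | _, _, _, _, _, .inl hV, hA => .inl (hV.restrict_modalCtx (Pol.odot_eq_box hA).1)
  | _, _, _, _, _, .inr hV, hA => .inr (hV.restrict_modalCtx (Pol.odot_eq_box hA).2)
  | _, _, _, _, _, .muN hneg _, hA => by simp [hA] at hneg
  | _, _, _, _, _, .boxI hΓ hV, _ => by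
    rw [modalCtx_eq_self hΓ]
    exact .boxI hΓ hV
  | _, _, _, _, _, .ren θ hV hθ, hA => .ren θ (hV.restrict_modalCtx hA) (Ren.modalCtx hθ)

/-- Modal restriction: a value of modal-polarity type is typable using only
the modal part `Γ_□` of `Γ`, the modal context `Θ`, and the empty classical
context. -/
theorem modal_restriction {Γ Θ Δ : Ctx} {V : Val} {A : Ty}
    (hA : pol A = Pol.box) (h : TyVal Γ Θ V A Δ) :
    TyVal (modalCtx Γ) Θ V A [] :=
  h.restrict_modalCtx hA

end LBox
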